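/- arXiv:1006.0367 — 2 statements merged into one kernel-verified Lean document; each statement's English description precedes it below -/
import Mathlib

section
/- Let A be an atomic set partition of [n] (n ≥ 1) with r blocks. Then the element p(A) := ∑_{γ ∈ Γ'(r)} (−1)^{ℓ(γ)−1} γ[A] of NCSym is primitive: Δ(p(A)) = p(A) ⊗ ∅ + ∅ ⊗ p(A). -/
open Finset

/-- `[n] = {1, …, n}` as a finset of naturals. -/
def seg (n : ℕ) : Finset ℕ := Finset.Icc 1 n

/-- A (raw) collection of blocks. -/
abbrev Blocks := Finset (Finset ℕ)

/-- The ground set (union of the blocks). -/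
def ground (A : Blocks) : Finset ℕ := A.sup id

/-- `A` is a set partition of the finite set `X`: nonempty pairwise disjoint blocks with union `X`. -/
def IsPartitionOf (A : Blocks) (X : Finset ℕ) : Prop :=
  (∀ B ∈ A, B.Nonempty) ∧ (A : Set (Finset ℕ)).PairwiseDisjoint id ∧ ground A = X

/-- `A` is a set partition of `[n]`. -/
def IsSP (A : Blocks) (n : ℕ) : Prop := IsPartitionOf A (seg n)

/-- The unique increasing bijection from `X` onto `[#X]`. -/
def stdFun (X : Finset ℕ) (x : ℕ) : ℕ := (X.filter (· < x)).card + 1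

/-- Standardization of a collection of blocks. -/
def stdP (A : Blocks) : Blocks := A.image fun B => B.image (stdFun (ground A))

/-- Shift all entries of all blocks up by `k`. -/
def shiftP (A : Blocks) (k : ℕ) : Blocks := A.image fun B => B.image (· + k)

/-- Concatenation `A | B` of set partitions: shift `B` up by the weight of `A`. -/
def concatP (A B : Blocks) : Blocks := A ∪ shiftP B (ground A).card

/-- The `i`-th block of `A` (1-based), where blocks are ordered by increasing minima. -/
def blockAt (A : Blocks) (i : ℕ) : Finset ℕ :=
  (A.filter fun B => (A.filter fun C => C.min ≤ B.min).card = i).sup id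

/-- `A_J` : the subcollection of blocks of `A` indexed by `J`. -/
def subColl (A : Blocks) (J : Finset ℕ) : Blocks := J.image (blockAt A)

/-- `A` is an atomic set partition of `[n]`. -/
def IsAtomicSP (A : Blocks) (n : ℕ) : Prop :=
  IsSP A n ∧ 1 ≤ n ∧
    ¬ ∃ m B C, 0 < m ∧ m < n ∧ IsSP B m ∧ IsSP C (n - m) ∧ A = concatP B C

/-- Raw set compositions: words whose letters are finsets of naturals. -/
abbrev SComp := List (Finset ℕ)

/-- The union of the letters of a word. -/
def sunion (γ : SComp) : Finset ℕ := γ.foldr (· ∪ ·) ∅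

/-- `γ` is a set composition of `K`. -/
def IsSCompOf (γ : SComp) (K : Finset ℕ) : Prop :=
  (∀ B ∈ γ, B.Nonempty) ∧ γ.Pairwise Disjoint ∧ sunion γ = K

/-- `γ[A] = std(A_{γ₁}) | std(A_{γ₂}) | ⋯ | std(A_{γₛ})`. -/
def applyComp (γ : SComp) (A : Blocks) : Blocks :=
  (γ.map fun g => stdP (subColl A g)).foldr concatP ∅

abbrev NCSym := Blocks →₀ ℚ

/-- The basis element of `NCSym` indexed by a set partition. -/
noncomputable def bas (A : Blocks) : NCSym := Finsupp.single A 1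

/-- `p(A) = ∑_{γ ∈ Γ'(r)} (-1)^{ℓ(γ)-1} γ[A]`. -/
noncomputable def pNC (A : Blocks) (r : ℕ) : NCSym :=
  ∑ᶠ γ ∈ {γ : SComp | IsSCompOf γ (seg r) ∧ 1 ∈ γ.headI},
    ((-1 : ℚ) ^ (γ.length - 1)) • bas (applyComp γ A)

open TensorProduct in
/-- `Δ(A) = ∑_{K ⊔ L = [r]} std(A_K) ⊗ std(A_L)` on a basis element. -/
noncomputable def deltaB (A : Blocks) : NCSym ⊗[ℚ] NCSym :=
  ∑ K ∈ (seg A.card).powerset,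
    bas (stdP (subColl A K)) ⊗ₜ[ℚ] bas (stdP (subColl A (seg A.card \ K)))

/-- The coproduct of `NCSym`, extended linearly. -/
noncomputable def Delta : NCSym →ₗ[ℚ] TensorProduct ℚ NCSym NCSym :=
  Finsupp.lsum ℚ fun A => LinearMap.toSpanSingleton ℚ _ (deltaB A)

/-!
For a set composition `γ` of `[r]`, the blocks of `γ[A]` are the blocks of `A` relabelled by a
bijection `blockPos γ` of `[r]`. Hence the blocks of `γ[A]` at a set of positions standardize to
`(γ ∩ T)[A]`, where `T ⊆ [r]` is the preimage of those positions and `γ ∩ T` takes the trace of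
every letter on `T` (empty letters contribute nothing), and
`Δ(γ[A]) = ∑_{T ⊆ [r]} (γ ∩ T)[A] ⊗ (γ ∩ ([r] \ T))[A]`.
The terms `T = ∅` and `T = [r]` of `Δ(p(A))` give `p(A) ⊗ ∅ + ∅ ⊗ p(A)`. For any other `T`, let
`P` be whichever of `T`, `[r] \ T` contains `1` and `Q` the other one. Splitting the first letter
that meets both `P` and `Q`, or merging the first letter inside `P` with a following letter inside
`Q`, is an involution of `Γ'(r)` that changes `ℓ(γ)` by one and keeps both traces `γ ∩ P`,
`γ ∩ Q` up to empty letters, so the signed sum over `Γ'(r)` for this `T` cancels.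
-/

namespace NCSym

/-! ### Ranks and standardization -/

section Rank

variable {α : Type*} [LinearOrder α]

def rk (S : Finset α) (x : α) : ℕ := #{y ∈ S | y ≤ x}

lemma rk_le_card (S : Finset α) (x : α) : rk S x ≤ #S :=
  card_le_card (filter_subset _ _)

lemma one_le_rk {S : Finset α} {x : α} (hx : x ∈ S) : 1 ≤ rk S x :=
  card_pos.2 ⟨x, mem_filter.2 ⟨hx, le_rfl⟩⟩

lemma rk_strictMonoOn (S : Finset α) : StrictMonoOn (rk S) S := by
  intro x _ y hy hxy
  refine card_lt_card ⟨monotone_filter_right S fun _ _ h => h.trans hxy.le, fun h => ?_⟩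
  exact (mem_filter.1 (h (mem_filter.2 ⟨hy, le_rfl⟩))).2.not_gt hxy

lemma rk_le_rk_iff {S : Finset α} {x y : α} (hx : x ∈ S) (hy : y ∈ S) :
    rk S x ≤ rk S y ↔ x ≤ y :=
  (rk_strictMonoOn S).le_iff_le hx hy

lemma rk_image (S : Finset α) : S.image (rk S) = seg #S := by
  refine eq_of_subset_of_card_le (fun i hi => ?_) ?_
  · obtain ⟨x, hx, rfl⟩ := mem_image.1 hi
    exact mem_Icc.2 ⟨one_le_rk hx, rk_le_card S x⟩
  · rw [card_image_of_injOn (rk_strictMonoOn S).injOn, seg, Nat.card_Icc, Nat.add_sub_cancel]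

lemma exists_rk_eq {S : Finset α} {i : ℕ} (hi : i ∈ seg #S) : ∃ x ∈ S, rk S x = i := by
  rw [← rk_image] at hi
  simpa using hi

end Rank

lemma card_seg (m : ℕ) : #(seg m) = m := by
  simp [seg]

lemma mem_seg {m i : ℕ} : i ∈ seg m ↔ 1 ≤ i ∧ i ≤ m := mem_Icc

lemma stdFun_eq_rk {X : Finset ℕ} {x : ℕ} (hx : x ∈ X) : stdFun X x = rk X x := by
  have : {y ∈ X | y ≤ x} = insert x {y ∈ X | y < x} := by
    ext y
    simp only [mem_filter, mem_insert]
    constructor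
    · rintro ⟨hy, hle⟩
      exact hle.eq_or_lt.imp id (⟨hy, ·⟩)
    · rintro (rfl | ⟨hy, hlt⟩)
      exacts [⟨hx, le_rfl⟩, ⟨hy, hlt.le⟩]
  rw [stdFun, rk, this, card_insert_of_notMem (by simp)]

lemma stdFun_strictMonoOn (X : Finset ℕ) : StrictMonoOn (stdFun X) X := by
  intro x hx y hy hxy
  rw [stdFun_eq_rk hx, stdFun_eq_rk hy]
  exact rk_strictMonoOn X hx hy hxy

lemma stdFun_image (X : Finset ℕ) : X.image (stdFun X) = seg #X := by
  rw [← rk_image]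
  exact image_congr fun x hx => stdFun_eq_rk hx

/-! ### Collections of blocks -/

def IsPartition (A : Blocks) : Prop :=
  (∀ B ∈ A, B.Nonempty) ∧ (A : Set (Finset ℕ)).PairwiseDisjoint id

lemma _root_.IsSP.isPartition {A : Blocks} {m : ℕ} (h : IsSP A m) : IsPartition A := ⟨h.1, h.2.1⟩

lemma _root_.IsSP.ground_eq {A : Blocks} {m : ℕ} (h : IsSP A m) : ground A = seg m := h.2.2

lemma _root_.IsSP.of_isPartition {A : Blocks} {m : ℕ} (hA : IsPartition A) (h : ground A = seg m) :
    IsSP A m := ⟨hA.1, hA.2, h⟩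

lemma IsPartition.subset {A A' : Blocks} (hA : IsPartition A) (h : A' ⊆ A) : IsPartition A' :=
  ⟨fun B hB => hA.1 B (h hB), hA.2.subset (coe_subset.2 h)⟩

lemma subset_ground {A : Blocks} {B : Finset ℕ} (hB : B ∈ A) : B ⊆ ground A :=
  le_sup (f := id) hB

lemma ground_empty : ground ∅ = ∅ := rfl

lemma ground_union (A A' : Blocks) : ground (A ∪ A') = ground A ∪ ground A' := sup_union

lemma _root_.IsSP.empty : IsSP ∅ 0 := ⟨by simp, by simp, rfl⟩

def mapP (f : ℕ → ℕ) (A : Blocks) : Blocks := A.image (Finset.image f)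

lemma stdP_eq_mapP (A : Blocks) : stdP A = mapP (stdFun (ground A)) A := rfl

lemma shiftP_eq_mapP (A : Blocks) (k : ℕ) : shiftP A k = mapP (· + k) A := rfl

lemma ground_mapP (f : ℕ → ℕ) (A : Blocks) : ground (mapP f A) = (ground A).image f := by
  rw [ground, ground, mapP, sup_image, sup_eq_biUnion, sup_eq_biUnion, biUnion_image]
  rfl

lemma mapP_union (f : ℕ → ℕ) (A A' : Blocks) : mapP f (A ∪ A') = mapP f A ∪ mapP f A' :=
  image_union _ _

lemma mapP_mapP (f g : ℕ → ℕ) (A : Blocks) : mapP g (mapP f A) = mapP (g ∘ f) A := by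
  simp only [mapP, image_image, Function.comp_def]

lemma mapP_congr {f g : ℕ → ℕ} {A : Blocks} (h : ∀ x ∈ ground A, f x = g x) :
    mapP f A = mapP g A :=
  image_congr fun _ hB => image_congr fun x hx => h x (subset_ground hB hx)

lemma mapP_id (A : Blocks) : mapP id A = A := by
  rw [mapP, show Finset.image (id : ℕ → ℕ) = id from funext fun _ => image_id, image_id]

lemma image_injOn_of_injOn {f : ℕ → ℕ} {A : Blocks} (hf : Set.InjOn f (ground A)) :
    Set.InjOn (Finset.image f) A := by
  intro B hB C hC h
  have := (hf.image_eq_image_iff (coe_subset.2 (subset_ground hB))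
    (coe_subset.2 (subset_ground hC))).1 (by simpa using congrArg ((↑) : _ → Set ℕ) h)
  exact_mod_cast this

lemma card_mapP {f : ℕ → ℕ} {A : Blocks} (hf : Set.InjOn f (ground A)) :
    #(mapP f A) = #A :=
  card_image_of_injOn (image_injOn_of_injOn hf)

lemma IsPartition.mapP {f : ℕ → ℕ} {A : Blocks} (hA : IsPartition A)
    (hf : Set.InjOn f (ground A)) : IsPartition (mapP f A) := by
  refine ⟨fun B hB => ?_, ?_⟩
  · obtain ⟨C, hC, rfl⟩ := mem_image.1 hB
    exact (hA.1 C hC).image f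
  · rintro _ hB' _ hC' hBC
    obtain ⟨B, hB, rfl⟩ := mem_image.1 hB'
    obtain ⟨C, hC, rfl⟩ := mem_image.1 hC'
    have hdisj := hA.2 hB hC (fun h => hBC (by rw [h]))
    rw [Function.onFun, id, id, ← disjoint_coe, coe_image, coe_image]
    exact (disjoint_coe.2 hdisj).image hf (coe_subset.2 (subset_ground hB))
      (coe_subset.2 (subset_ground hC))

lemma IsPartition.stdP {A : Blocks} (hA : IsPartition A) : IsPartition (stdP A) :=
  hA.mapP (stdFun_strictMonoOn _).injOn

lemma card_stdP (A : Blocks) : #(stdP A) = #A :=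
  card_mapP (stdFun_strictMonoOn _).injOn

lemma ground_stdP (A : Blocks) : ground (stdP A) = seg #(ground A) := by
  rw [stdP_eq_mapP, ground_mapP, stdFun_image]

lemma IsPartition.isSP_stdP {A : Blocks} (hA : IsPartition A) : IsSP (_root_.stdP A) #(ground A) :=
  .of_isPartition hA.stdP (ground_stdP A)

/-! ### Blocks ordered by their minima -/

def blockRank (A : Blocks) (B : Finset ℕ) : ℕ := #{C ∈ A | C.min ≤ B.min}

section BlockRank

variable {A : Blocks}

lemma min_injOn (hA : IsPartition A) : Set.InjOn Finset.min (A : Set (Finset ℕ)) := by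
  intro B hB C hC h
  obtain ⟨a, ha⟩ := Finset.min_of_nonempty (hA.1 B hB)
  by_contra hBC
  exact disjoint_left.1 (hA.2 hB hC hBC) (mem_of_min ha) (mem_of_min (h ▸ ha))

lemma blockRank_eq_rk (hA : IsPartition A) (B : Finset ℕ) :
    blockRank A B = rk (A.image Finset.min) B.min := by
  rw [blockRank, rk, filter_image, card_image_of_injOn ((min_injOn hA).mono
    (coe_subset.2 (filter_subset _ _)))]

lemma card_image_min (hA : IsPartition A) : #(A.image Finset.min) = #A :=
  card_image_of_injOn (min_injOn hA)

lemma blockRank_le_blockRank_iff (hA : IsPartition A) {B C : Finset ℕ} (hB : B ∈ A)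
    (hC : C ∈ A) : blockRank A B ≤ blockRank A C ↔ B.min ≤ C.min := by
  rw [blockRank_eq_rk hA, blockRank_eq_rk hA]
  exact rk_le_rk_iff (mem_image_of_mem _ hB) (mem_image_of_mem _ hC)

lemma blockRank_injOn (hA : IsPartition A) : Set.InjOn (blockRank A) A :=
  fun _ hB _ hC h => min_injOn hA hB hC <| le_antisymm
    ((blockRank_le_blockRank_iff hA hB hC).1 h.le) ((blockRank_le_blockRank_iff hA hC hB).1 h.ge)

lemma exists_blockRank_eq (hA : IsPartition A) {i : ℕ} (hi : i ∈ seg #A) :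
    ∃ B ∈ A, blockRank A B = i := by
  rw [← card_image_min hA] at hi
  obtain ⟨m, hm, rfl⟩ := exists_rk_eq hi
  obtain ⟨B, hB, rfl⟩ := mem_image.1 hm
  exact ⟨B, hB, blockRank_eq_rk hA B⟩

lemma blockAt_blockRank (hA : IsPartition A) {B : Finset ℕ} (hB : B ∈ A) :
    blockAt A (blockRank A B) = B := by
  have : {C ∈ A | blockRank A C = blockRank A B} = {B} := by
    ext C
    simp only [mem_filter, mem_singleton]
    exact ⟨fun h => blockRank_injOn hA h.1 hB h.2, by rintro rfl; exact ⟨hB, rfl⟩⟩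
  exact (congrArg (sup · id) this).trans (sup_singleton)

lemma blockAt_mem (hA : IsPartition A) {i : ℕ} (hi : i ∈ seg #A) :
    blockAt A i ∈ A := by
  obtain ⟨B, hB, rfl⟩ := exists_blockRank_eq hA hi
  rwa [blockAt_blockRank hA hB]

lemma blockRank_blockAt (hA : IsPartition A) {i : ℕ} (hi : i ∈ seg #A) :
    blockRank A (blockAt A i) = i := by
  obtain ⟨B, hB, rfl⟩ := exists_blockRank_eq hA hi
  rw [blockAt_blockRank hA hB]

lemma blockAt_injOn (hA : IsPartition A) : Set.InjOn (blockAt A) (seg #A) :=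
  fun i hi j hj h => by rw [← blockRank_blockAt hA hi, ← blockRank_blockAt hA hj, h]

variable {J : Finset ℕ}

lemma subColl_subset (hA : IsPartition A) (hJ : J ⊆ seg #A) : subColl A J ⊆ A := by
  intro B hB
  obtain ⟨i, hi, rfl⟩ := mem_image.1 hB
  exact blockAt_mem hA (hJ hi)

lemma IsPartition.subColl (hA : IsPartition A) (hJ : J ⊆ seg #A) :
    IsPartition (_root_.subColl A J) :=
  hA.subset (subColl_subset hA hJ)

lemma card_subColl (hA : IsPartition A) (hJ : J ⊆ seg #A) :
    #(subColl A J) = #J :=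
  card_image_of_injOn ((blockAt_injOn hA).mono (coe_subset.2 hJ))

lemma ground_subColl_subset (hA : IsPartition A) (hJ : J ⊆ seg #A) :
    ground (subColl A J) ⊆ ground A :=
  Finset.sup_le fun _ hB => subset_ground (subColl_subset hA hJ hB)

lemma blockRank_subColl (hA : IsPartition A) (hJ : J ⊆ seg #A) {i : ℕ} (hi : i ∈ J) :
    blockRank (subColl A J) (blockAt A i) = rk J i := by
  have key : {C ∈ subColl A J | C.min ≤ (blockAt A i).min} = {j ∈ J | j ≤ i}.image (blockAt A) := by
    rw [subColl, filter_image]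
    refine congrArg _ (filter_congr fun j hj => ?_)
    rw [← blockRank_le_blockRank_iff hA (blockAt_mem hA (hJ hj)) (blockAt_mem hA (hJ hi)),
      blockRank_blockAt hA (hJ hj), blockRank_blockAt hA (hJ hi)]
  rw [blockRank, key, card_image_of_injOn ((blockAt_injOn hA).mono
    (coe_subset.2 ((filter_subset _ _).trans hJ))), rk]

lemma blockAt_subColl (hA : IsPartition A) (hJ : J ⊆ seg #A) {i : ℕ} (hi : i ∈ J) :
    blockAt (subColl A J) (rk J i) = blockAt A i := by
  rw [← blockRank_subColl hA hJ hi]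
  exact blockAt_blockRank (hA.subColl hJ) (mem_image_of_mem _ hi)

lemma subColl_subColl (hA : IsPartition A) (hJ : J ⊆ seg #A) {K : Finset ℕ}
    (hK : K ⊆ seg #J) : subColl (subColl A J) K = subColl A {i ∈ J | rk J i ∈ K} := by
  ext B
  simp only [subColl, mem_image, mem_filter]
  constructor
  · rintro ⟨k, hk, rfl⟩
    obtain ⟨i, hi, rfl⟩ := exists_rk_eq (hK hk)
    exact ⟨i, ⟨hi, hk⟩, (blockAt_subColl hA hJ hi).symm⟩
  · rintro ⟨i, ⟨hi, hik⟩, rfl⟩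
    exact ⟨rk J i, hik, blockAt_subColl hA hJ hi⟩

end BlockRank

section MonotoneImage

variable {s B C : Finset ℕ} {f : ℕ → ℕ}

lemma min_image_eq (hf : MonotoneOn f s) (hB : B ⊆ s) (hne : B.Nonempty) :
    (B.image f).min = f (B.min' hne) := by
  refine le_antisymm (min_le (mem_image_of_mem f (min'_mem B hne))) (Finset.le_min fun b hb => ?_)
  obtain ⟨c, hc, rfl⟩ := mem_image.1 hb
  exact WithTop.coe_le_coe.2 (hf (hB (min'_mem B hne)) (hB hc) (min'_le B c hc))

lemma min_image_le_min_image_iff (hf : StrictMonoOn f s) (hB : B ⊆ s) (hC : C ⊆ s)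
    (hBne : B.Nonempty) (hCne : C.Nonempty) :
    (B.image f).min ≤ (C.image f).min ↔ B.min ≤ C.min := by
  rw [min_image_eq hf.monotoneOn hB hBne, min_image_eq hf.monotoneOn hC hCne, ← coe_min' hBne,
    ← coe_min' hCne]
  exact_mod_cast hf.le_iff_le (hB (min'_mem B hBne)) (hC (min'_mem C hCne))

end MonotoneImage

section MapP

variable {A : Blocks} {f : ℕ → ℕ}

lemma blockRank_mapP (hA : IsPartition A) (hf : StrictMonoOn f (ground A)) {B : Finset ℕ}
    (hB : B ∈ A) : blockRank (mapP f A) (B.image f) = blockRank A B := by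
  have key : {C ∈ mapP f A | C.min ≤ (B.image f).min} =
      {C ∈ A | C.min ≤ B.min}.image (image f) := by
    rw [mapP, filter_image]
    exact congrArg _ (filter_congr fun C hC => min_image_le_min_image_iff hf (subset_ground hC)
      (subset_ground hB) (hA.1 C hC) (hA.1 B hB))
  rw [blockRank, key, card_image_of_injOn ((image_injOn_of_injOn hf.injOn).mono
    (coe_subset.2 (filter_subset _ _))), blockRank]

lemma blockAt_mapP (hA : IsPartition A) (hf : StrictMonoOn f (ground A)) {i : ℕ}
    (hi : i ∈ seg #A) : blockAt (mapP f A) i = (blockAt A i).image f := by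
  conv_lhs => rw [← blockRank_blockAt hA hi, ← blockRank_mapP hA hf (blockAt_mem hA hi)]
  exact blockAt_blockRank (hA.mapP hf.injOn) (mem_image_of_mem _ (blockAt_mem hA hi))

lemma subColl_mapP (hA : IsPartition A) (hf : StrictMonoOn f (ground A)) {J : Finset ℕ}
    (hJ : J ⊆ seg #A) : subColl (mapP f A) J = mapP f (subColl A J) := by
  rw [subColl, subColl, mapP, mapP, image_image]
  exact image_congr fun i hi => blockAt_mapP hA hf (hJ hi)

lemma stdP_mapP (hf : StrictMonoOn f (ground A)) : stdP (mapP f A) = stdP A := by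
  rw [stdP_eq_mapP, stdP_eq_mapP, mapP_mapP]
  refine mapP_congr fun x hx => ?_
  have key : {y ∈ (ground A).image f | y < f x} = {y ∈ ground A | y < x}.image f := by
    rw [filter_image]
    exact congrArg _ (filter_congr fun y hy => hf.lt_iff_lt hy hx)
  rw [Function.comp_apply, ground_mapP, stdFun, stdFun, key,
    card_image_of_injOn (hf.injOn.mono (coe_subset.2 (filter_subset _ _)))]

lemma stdP_subColl_stdP (hA : IsPartition A) {K : Finset ℕ} (hK : K ⊆ seg #A) :
    stdP (subColl (stdP A) K) = stdP (subColl A K) := by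
  rw [stdP_eq_mapP A, subColl_mapP hA (stdFun_strictMonoOn _) hK]
  exact stdP_mapP ((stdFun_strictMonoOn _).mono (coe_subset.2 (ground_subColl_subset hA hK)))

end MapP

/-! ### Shifts and concatenation -/

lemma ground_shiftP (A : Blocks) (k : ℕ) : ground (shiftP A k) = (ground A).image (· + k) :=
  ground_mapP _ A

lemma IsPartition.shiftP {A : Blocks} (hA : IsPartition A) (k : ℕ) :
    IsPartition (_root_.shiftP A k) :=
  hA.mapP (add_left_injective k).injOn

lemma card_shiftP (A : Blocks) (k : ℕ) : #(shiftP A k) = #A :=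
  card_mapP (add_left_injective k).injOn

lemma shiftP_zero (A : Blocks) : shiftP A 0 = A :=
  (mapP_congr fun _ _ => rfl).trans (mapP_id A)

lemma mem_shiftP {A : Blocks} {k : ℕ} {D : Finset ℕ} :
    D ∈ shiftP A k ↔ ∃ E ∈ A, E.image (· + k) = D := mem_image

lemma concatP_empty_left (B : Blocks) : concatP ∅ B = B := by
  rw [concatP, ground_empty, card_empty, shiftP_zero, empty_union]

section Concat

variable {B C : Blocks} {mB mC : ℕ}

lemma _root_.IsSP.ground_shiftP (hC : IsSP C mC) (k : ℕ) :
    ground (shiftP C k) = Icc (1 + k) (mC + k) := by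
  rw [NCSym.ground_shiftP, hC.ground_eq, seg, image_add_right_Icc]

lemma min_le_of_isSP (hB : IsSP B mB) {D : Finset ℕ} (hD : D ∈ B) : D.min ≤ mB := by
  obtain ⟨x, hx⟩ := hB.1 D hD
  have := (mem_seg.1 (hB.ground_eq ▸ subset_ground hD hx)).2
  exact (min_le hx).trans (WithTop.coe_le_coe.2 this)

lemma lt_min_of_mem_shiftP (hC : IsSP C mC) {k : ℕ} {E : Finset ℕ} (hE : E ∈ shiftP C k) :
    k < E.min := by
  obtain ⟨a, ha⟩ := min_of_nonempty ((hC.isPartition.shiftP k).1 E hE)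
  have := mem_Icc.1 (hC.ground_shiftP k ▸ subset_ground hE (mem_of_min ha))
  rw [ha]
  exact WithTop.coe_lt_coe.2 (show k < a by omega)

lemma concatP_eq (hB : IsSP B mB) (C : Blocks) : concatP B C = B ∪ shiftP C mB := by
  rw [concatP, hB.ground_eq, card_seg]

lemma disjoint_shiftP (hB : IsSP B mB) (hC : IsSP C mC) : Disjoint B (shiftP C mB) :=
  disjoint_left.2 fun _ hD hD' =>
    (lt_min_of_mem_shiftP hC hD').not_ge (min_le_of_isSP hB hD)

lemma _root_.IsSP.concatP (hB : IsSP B mB) (hC : IsSP C mC) :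
    IsSP (concatP B C) (mB + mC) := by
  have hB' := hB.isPartition
  have hC' := hC.isPartition.shiftP mB
  rw [concatP_eq hB]
  refine ⟨fun D hD => (mem_union.1 hD).elim (hB'.1 D) (hC'.1 D), ?_, ?_⟩
  · rw [coe_union, Set.pairwiseDisjoint_union]
    refine ⟨hB'.2, hC'.2, fun D hD E hE _ => disjoint_left.2 fun x hxD hxE => ?_⟩
    have h1 := mem_seg.1 (hB.ground_eq ▸ subset_ground hD hxD)
    have h2 := mem_Icc.1 (hC.ground_shiftP mB ▸ subset_ground hE hxE)
    omega
  · rw [ground_union, hB.ground_eq, hC.ground_shiftP]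
    ext x
    simp only [mem_union, mem_seg, mem_Icc]
    omega

lemma card_concatP (hB : IsSP B mB) (hC : IsSP C mC) : #(concatP B C) = #B + #C := by
  rw [concatP_eq hB, card_union_of_disjoint (disjoint_shiftP hB hC), card_shiftP]

lemma blockRank_union_of_forall_lt {A A' : Blocks} {D : Finset ℕ}
    (h : ∀ E ∈ A', D.min < E.min) : blockRank (A ∪ A') D = blockRank A D := by
  rw [blockRank, blockRank, filter_union, filter_false_of_mem fun E hE => (h E hE).not_ge,
    union_empty]

lemma blockRank_union_of_forall_le {A A' : Blocks} {D : Finset ℕ} (hAA' : Disjoint A A')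
    (h : ∀ E ∈ A, E.min ≤ D.min) : blockRank (A ∪ A') D = #A + blockRank A' D := by
  rw [blockRank, blockRank, filter_union, filter_true_of_mem h,
    card_union_of_disjoint (hAA'.mono_right (filter_subset _ _))]

lemma blockRank_concatP_left (hB : IsSP B mB) (hC : IsSP C mC) {D : Finset ℕ} (hD : D ∈ B) :
    blockRank (concatP B C) D = blockRank B D := by
  rw [concatP_eq hB]
  exact blockRank_union_of_forall_lt fun E hE =>
    (min_le_of_isSP hB hD).trans_lt (lt_min_of_mem_shiftP hC hE)

lemma blockRank_concatP_right (hB : IsSP B mB) (hC : IsSP C mC) {E : Finset ℕ} (hE : E ∈ C) :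
    blockRank (concatP B C) (E.image (· + mB)) = #B + blockRank C E := by
  rw [concatP_eq hB, blockRank_union_of_forall_le (disjoint_shiftP hB hC) fun D hD =>
    ((min_le_of_isSP hB hD).trans_lt (lt_min_of_mem_shiftP hC (mem_shiftP.2 ⟨E, hE, rfl⟩))).le,
    shiftP_eq_mapP, blockRank_mapP hC.isPartition (add_left_strictMono.strictMonoOn _) hE]

lemma blockAt_concatP_left (hB : IsSP B mB) (hC : IsSP C mC) {i : ℕ} (hi : i ∈ seg #B) :
    blockAt (concatP B C) i = blockAt B i := by
  have hmem := blockAt_mem hB.isPartition hi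
  conv_lhs => rw [← blockRank_blockAt hB.isPartition hi, ← blockRank_concatP_left hB hC hmem]
  exact blockAt_blockRank (hB.concatP hC).isPartition (mem_union_left _ hmem)

lemma blockAt_concatP_right (hB : IsSP B mB) (hC : IsSP C mC) {i : ℕ} (hi : i ∈ seg #C) :
    blockAt (concatP B C) (#B + i) = (blockAt C i).image (· + mB) := by
  have hmem := blockAt_mem hC.isPartition hi
  conv_lhs => rw [← blockRank_blockAt hC.isPartition hi, ← blockRank_concatP_right hB hC hmem]
  refine blockAt_blockRank (hB.concatP hC).isPartition ?_
  rw [concatP_eq hB]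
  exact mem_union_right _ (mem_shiftP.2 ⟨_, hmem, rfl⟩)

lemma subColl_concatP (hB : IsSP B mB) (hC : IsSP C mC) {K : Finset ℕ}
    (hK : K ⊆ seg (#B + #C)) :
    subColl (concatP B C) K =
      subColl B {k ∈ K | k ≤ #B} ∪ shiftP (subColl C {i ∈ seg #C | #B + i ∈ K}) mB := by
  ext D
  simp only [subColl, mem_union, mem_shiftP, mem_image, mem_filter]
  constructor
  · rintro ⟨k, hk, rfl⟩
    have hk' := mem_seg.1 (hK hk)
    rcases le_or_gt k #B with hkB | hkB
    · exact Or.inl ⟨k, ⟨hk, hkB⟩, (blockAt_concatP_left hB hC (mem_seg.2 ⟨hk'.1, hkB⟩)).symm⟩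
    · have hi : k - #B ∈ seg #C := mem_seg.2 (by omega)
      refine Or.inr ⟨_, ⟨k - #B, ⟨hi, by rwa [Nat.add_sub_cancel' hkB.le]⟩, rfl⟩, ?_⟩
      rw [← blockAt_concatP_right hB hC hi, Nat.add_sub_cancel' hkB.le]
  · rintro (⟨k, ⟨hk, hkB⟩, rfl⟩ | ⟨E, ⟨i, ⟨hi, hiK⟩, rfl⟩, rfl⟩)
    · exact ⟨k, hk, blockAt_concatP_left hB hC (mem_seg.2 ⟨(mem_seg.1 (hK hk)).1, hkB⟩)⟩
    · exact ⟨#B + i, hiK, blockAt_concatP_right hB hC hi⟩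

end Concat

section Layered

variable {X Y : Finset ℕ} {m : ℕ}

lemma stdFun_union_image_add_of_le (hY : ∀ y ∈ Y, 1 ≤ y) {x : ℕ} (hx : x ≤ m) :
    stdFun (X ∪ Y.image (· + m)) x = stdFun X x := by
  have : {z ∈ Y.image (· + m) | z < x} = ∅ := filter_eq_empty_iff.2 fun z hz => by
    obtain ⟨y, hy, rfl⟩ := mem_image.1 hz
    have := hY y hy
    omega
  rw [stdFun, stdFun, filter_union, this, union_empty]

lemma stdFun_union_image_add (hX : ∀ x ∈ X, x ≤ m) (hY : ∀ y ∈ Y, 1 ≤ y) {y : ℕ}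
    (hy : 1 ≤ y) : stdFun (X ∪ Y.image (· + m)) (y + m) = stdFun Y y + #X := by
  have hfilter : {z ∈ Y.image (· + m) | z < y + m} = {z ∈ Y | z < y}.image (· + m) := by
    rw [filter_image]
    exact congrArg _ (filter_congr fun z _ => Nat.add_lt_add_iff_right)
  have hdisj : Disjoint X ({z ∈ Y | z < y}.image (· + m)) := by
    refine disjoint_left.2 fun x hx hx' => ?_
    obtain ⟨z, hz, rfl⟩ := mem_image.1 hx'
    have := hX _ hx
    have := hY z (mem_filter.1 hz).1
    omega
  rw [stdFun, stdFun, filter_union, filter_true_of_mem fun x hx => by have := hX x hx; omega,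
    hfilter, card_union_of_disjoint hdisj, card_image_of_injective _ (add_left_injective m)]
  omega

end Layered

lemma stdP_union_shiftP {D E : Blocks} {m : ℕ} (hD : ∀ x ∈ ground D, x ≤ m)
    (hE : ∀ y ∈ ground E, 1 ≤ y) : stdP (D ∪ shiftP E m) = concatP (stdP D) (stdP E) := by
  set σ := stdFun (ground D ∪ (ground E).image (· + m))
  have hlow : mapP σ D = stdP D :=
    mapP_congr fun x hx => stdFun_union_image_add_of_le hE (hD x hx)
  have hhigh : mapP σ (shiftP E m) = shiftP (stdP E) #(ground D) := by
    rw [shiftP_eq_mapP, shiftP_eq_mapP, stdP_eq_mapP, mapP_mapP, mapP_mapP]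
    exact mapP_congr fun y hy => stdFun_union_image_add hD hE (hE y hy)
  rw [stdP_eq_mapP, ground_union, ground_shiftP, mapP_union, hlow, hhigh, concatP, ground_stdP,
    card_seg]

/-! ### The blocks of `γ[A]` -/

lemma sunion_cons (g : Finset ℕ) (γ : SComp) : sunion (g :: γ) = g ∪ sunion γ := rfl

lemma subset_sunion {γ : SComp} {g : Finset ℕ} (hg : g ∈ γ) : g ⊆ sunion γ := by
  induction γ with
  | nil => cases hg
  | cons h γ ih =>
    rcases List.mem_cons.1 hg with rfl | hg
    · exact subset_union_left
    · exact (ih hg).trans subset_union_right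

lemma headI_subset_sunion (γ : SComp) : γ.headI ⊆ sunion γ := by
  cases γ with
  | nil => exact empty_subset _
  | cons g γ => exact subset_union_left

lemma mem_sunion {γ : SComp} {j : ℕ} : j ∈ sunion γ ↔ ∃ g ∈ γ, j ∈ g := by
  induction γ with
  | nil => simp [sunion]
  | cons h γ ih => simp [sunion_cons, ih]

lemma disjoint_sunion {γ : SComp} {g : Finset ℕ} (h : ∀ x ∈ γ, Disjoint g x) :
    Disjoint g (sunion γ) :=
  disjoint_right.2 fun j hj hjg => by
    obtain ⟨x, hx, hjx⟩ := mem_sunion.1 hj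
    exact disjoint_left.1 (h x hx) hjg hjx

lemma card_sunion {γ : SComp} (hpd : γ.Pairwise Disjoint) :
    #(sunion γ) = (γ.map card).sum := by
  induction γ with
  | nil => rfl
  | cons g γ ih =>
    obtain ⟨hg, hpd⟩ := List.pairwise_cons.1 hpd
    rw [sunion_cons, card_union_of_disjoint (disjoint_sunion hg), ih hpd, List.map_cons,
      List.sum_cons]

section ApplyComp

variable {A : Blocks}

lemma applyComp_cons (g : Finset ℕ) (γ : SComp) (A : Blocks) :
    applyComp (g :: γ) A = concatP (stdP (subColl A g)) (applyComp γ A) := rfl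

lemma applyComp_cons_empty (γ : SComp) (A : Blocks) : applyComp (∅ :: γ) A = applyComp γ A :=
  concatP_empty_left _

lemma isSP_applyComp (hA : IsPartition A) {γ : SComp} (hγ : ∀ g ∈ γ, g ⊆ seg #A) :
    ∃ m, IsSP (applyComp γ A) m := by
  induction γ with
  | nil => exact ⟨0, IsSP.empty⟩
  | cons g γ ih =>
    obtain ⟨m, hm⟩ := ih fun h hh => hγ h (List.mem_cons_of_mem g hh)
    exact ⟨_, ((hA.subColl (hγ g List.mem_cons_self)).isSP_stdP).concatP hm⟩

lemma card_applyComp (hA : IsPartition A) {γ : SComp} (hγ : ∀ g ∈ γ, g ⊆ seg #A) :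
    #(applyComp γ A) = (γ.map card).sum := by
  induction γ with
  | nil => rfl
  | cons g γ ih =>
    have hg := hγ g List.mem_cons_self
    have hγ' : ∀ h ∈ γ, h ⊆ seg #A := fun h hh => hγ h (List.mem_cons_of_mem g hh)
    obtain ⟨m, hm⟩ := isSP_applyComp hA hγ'
    rw [applyComp_cons, card_concatP (hA.subColl hg).isSP_stdP hm, ih hγ', card_stdP,
      card_subColl hA hg, List.map_cons, List.sum_cons]

end ApplyComp

/-- The position, among the blocks of `γ[A]`, of the block coming from the block `A_j`. -/
def blockPos : SComp → ℕ → ℕ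
  | [], _ => 0
  | g :: γ, j => if j ∈ g then rk g j else #g + blockPos γ j

lemma blockPos_mem_seg {γ : SComp} {j : ℕ} (hj : j ∈ sunion γ) :
    blockPos γ j ∈ seg (γ.map card).sum := by
  induction γ with
  | nil => simp [sunion] at hj
  | cons g γ ih =>
    rw [List.map_cons, List.sum_cons, mem_seg, blockPos]
    split_ifs with hjg
    · exact ⟨one_le_rk hjg, (rk_le_card g j).trans (Nat.le_add_right _ _)⟩
    · have := mem_seg.1 (ih ((mem_union.1 hj).resolve_left hjg))
      omega

lemma blockPos_injOn {γ : SComp} (hpd : γ.Pairwise Disjoint) :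
    Set.InjOn (blockPos γ) (sunion γ) := by
  induction γ with
  | nil => intro j hj; simp [sunion] at hj
  | cons g γ ih =>
    obtain ⟨hg, hpd⟩ := List.pairwise_cons.1 hpd
    have pos_g : ∀ j ∈ g, blockPos (g :: γ) j = rk g j := fun j hj => if_pos hj
    have pos_γ : ∀ j ∈ sunion γ, blockPos (g :: γ) j = #g + blockPos γ j := fun j hj =>
      if_neg (disjoint_right.1 (disjoint_sunion hg) hj)
    have bound : ∀ j ∈ g, ∀ j' ∈ sunion γ, rk g j < #g + blockPos γ j' := fun j _ j' hj' =>
      (rk_le_card g j).trans_lt (by have := mem_seg.1 (blockPos_mem_seg hj'); omega)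
    intro j hj j' hj' h
    rw [mem_coe, sunion_cons, mem_union] at hj hj'
    rcases hj with hj | hj <;> rcases hj' with hj' | hj'
    · rw [pos_g j hj, pos_g j' hj'] at h
      exact (rk_strictMonoOn g).injOn hj hj' h
    · rw [pos_g j hj, pos_γ j' hj'] at h
      exact absurd h (bound j hj j' hj').ne
    · rw [pos_γ j hj, pos_g j' hj'] at h
      exact absurd h.symm (bound j' hj' j hj).ne
    · rw [pos_γ j hj, pos_γ j' hj'] at h
      exact ih hpd hj hj' (Nat.add_left_cancel h)

lemma image_blockPos {γ : SComp} (hpd : γ.Pairwise Disjoint) :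
    (sunion γ).image (blockPos γ) = seg (γ.map card).sum :=
  eq_of_subset_of_card_le (image_subset_iff.2 fun _ hj => blockPos_mem_seg hj)
    (by rw [card_image_of_injOn (blockPos_injOn hpd), card_seg, card_sunion hpd])

theorem stdP_subColl_applyComp {A : Blocks} (hA : IsPartition A) {γ : SComp}
    (hγ : ∀ g ∈ γ, g ⊆ seg #A) (hpd : γ.Pairwise Disjoint) {K : Finset ℕ}
    (hK : K ⊆ seg (γ.map card).sum) :
    stdP (subColl (applyComp γ A) K) =
      applyComp (γ.map fun g : Finset ℕ => {j ∈ g | blockPos γ j ∈ K}) A := by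
  induction γ generalizing K with
  | nil =>
    obtain rfl : K = ∅ := subset_empty.1 hK
    rfl
  | cons g γ ih =>
    have hg := hγ g List.mem_cons_self
    have hγ' : ∀ h ∈ γ, h ⊆ seg #A := fun h hh => hγ h (List.mem_cons_of_mem g hh)
    obtain ⟨hgγ, hpd'⟩ := List.pairwise_cons.1 hpd
    rw [applyComp_cons]
    set B := stdP (subColl A g)
    set C := applyComp γ A
    have hB : IsSP B #(ground (subColl A g)) := (hA.subColl hg).isSP_stdP
    obtain ⟨mC, hC⟩ := isSP_applyComp hA hγ'
    have hcardB : #B = #g := (card_stdP _).trans (card_subColl hA hg)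
    have hcardC : #C = (γ.map card).sum := card_applyComp hA hγ'
    have hK' : K ⊆ seg (#B + #C) := by
      rwa [hcardB, hcardC, ← List.sum_cons, ← List.map_cons]
    have hK₁ : ∀ k ∈ {k ∈ K | k ≤ #B}, k ∈ seg #g := fun k hk =>
      mem_seg.2 ⟨(mem_seg.1 (hK' (mem_filter.1 hk).1)).1, hcardB ▸ (mem_filter.1 hk).2⟩
    have hK₂ : {i ∈ seg #C | #B + i ∈ K} ⊆ seg (γ.map card).sum := hcardC ▸ filter_subset _ _
    have hlow : ∀ x ∈ ground (subColl B {k ∈ K | k ≤ #B}), x ≤ #(ground (subColl A g)) :=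
      fun x hx => (mem_seg.1 (hB.ground_eq ▸ ground_subColl_subset hB.isPartition
        (fun k hk => hcardB ▸ hK₁ k hk) hx)).2
    have hhigh : ∀ y ∈ ground (subColl C {i ∈ seg #C | #B + i ∈ K}), 1 ≤ y := fun y hy =>
      (mem_seg.1 (hC.ground_eq ▸ ground_subColl_subset hC.isPartition (filter_subset _ _) hy)).1
    rw [subColl_concatP hB hC hK', stdP_union_shiftP hlow hhigh,
      stdP_subColl_stdP (hA.subColl hg) (fun k hk => card_subColl hA hg ▸ hK₁ k hk),
      subColl_subColl hA hg hK₁, ih hγ' hpd' hK₂, List.map_cons, applyComp_cons]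
    congr 1
    · congr 2
      refine filter_congr fun j hj => ?_
      rw [blockPos, if_pos hj, mem_filter, hcardB]
      exact and_iff_left (rk_le_card g j)
    · refine congrArg (applyComp · A) (List.map_congr_left fun h hh => filter_congr fun j hj => ?_)
      rw [blockPos, if_neg (disjoint_right.1 (hgγ h hh) hj), mem_filter, hcardB, hcardC]
      exact and_iff_right (blockPos_mem_seg (subset_sunion hh hj))

lemma sum_powerset_preimage {M : Type*} [AddCommMonoid M] {s t : Finset ℕ} {f : ℕ → ℕ}
    (hf : Set.InjOn f s) (hst : s.image f = t) (F : Finset ℕ → M) :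
    ∑ K ∈ t.powerset, F {j ∈ s | f j ∈ K} = ∑ T ∈ s.powerset, F T := by
  refine sum_nbij' (fun K => {j ∈ s | f j ∈ K}) (image f) (fun K _ => ?_) (fun T hT => ?_)
    (fun K hK => ?_) (fun T hT => ?_) fun _ _ => rfl
  · exact mem_powerset.2 (filter_subset _ _)
  · exact mem_powerset.2 (hst ▸ image_subset_image (mem_powerset.1 hT))
  · have h := filter_image (s := s) (f := f) (p := (· ∈ K))
    rw [hst, filter_mem_eq_inter, inter_eq_right.2 (mem_powerset.1 hK)] at h
    exact h.symm
  · refine (filter_congr fun j hj => ?_).trans (filter_mem_eq_inter.trans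
      (inter_eq_right.2 (mem_powerset.1 hT)))
    rw [← mem_coe, coe_image, hf.mem_image_iff (coe_subset.2 (mem_powerset.1 hT)) hj, mem_coe]

lemma Delta_bas (B : Blocks) : Delta (bas B) = deltaB B := by
  rw [Delta, bas, Finsupp.lsum_single, LinearMap.toSpanSingleton_apply, one_smul]

open TensorProduct

noncomputable def coprodTerm (A : Blocks) (r : ℕ) (γ : SComp) (T : Finset ℕ) :
    NCSym ⊗[ℚ] NCSym :=
  bas (applyComp (γ.map (· ∩ T)) A) ⊗ₜ[ℚ] bas (applyComp (γ.map (· ∩ (seg r \ T))) A)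

lemma deltaB_applyComp {A : Blocks} (hA : IsPartition A) {r : ℕ} (hr : #A = r) {γ : SComp}
    (hγ : IsSCompOf γ (seg r)) :
    deltaB (applyComp γ A) = ∑ T ∈ (seg r).powerset, coprodTerm A r γ T := by
  obtain ⟨-, hpd, hsu⟩ := hγ
  have hsub : ∀ g ∈ γ, g ⊆ seg r := fun g hg => hsu ▸ subset_sunion hg
  have hsum : (γ.map card).sum = r := by rw [← card_sunion hpd, hsu, card_seg]
  have hcard : #(applyComp γ A) = r := by rw [card_applyComp hA (hr ▸ hsub), hsum]
  have hfilter : ∀ K : Finset ℕ, ∀ g ∈ γ,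
      {j ∈ g | blockPos γ j ∈ K} = g ∩ {j ∈ seg r | blockPos γ j ∈ K} :=
    fun K g hg => by rw [inter_filter, inter_eq_left.2 (hsub g hg)]
  have hfilter_compl : ∀ K : Finset ℕ, ∀ g ∈ γ,
      {j ∈ g | blockPos γ j ∈ seg r \ K} = g ∩ (seg r \ {j ∈ seg r | blockPos γ j ∈ K}) := by
    intro K g hg
    ext j
    simp only [mem_filter, mem_inter, mem_sdiff]
    constructor
    · rintro ⟨hj, -, hjK⟩
      exact ⟨hj, hsub g hg hj, fun h => hjK h.2⟩
    · rintro ⟨hj, hjr, hjK⟩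
      exact ⟨hj, hsum ▸ blockPos_mem_seg (hsu ▸ hjr), fun h => hjK ⟨hjr, h⟩⟩
  have himage : (seg r).image (blockPos γ) = seg r := by rw [← hsu, image_blockPos hpd, hsum, hsu]
  rw [deltaB, hcard]
  refine (sum_congr rfl fun K hK => ?_).trans
    (sum_powerset_preimage (hsu ▸ blockPos_injOn hpd) himage (coprodTerm A r γ))
  have hK := mem_powerset.1 hK
  rw [coprodTerm, stdP_subColl_applyComp hA (hr ▸ hsub) hpd (hsum ▸ hK),
    stdP_subColl_applyComp hA (hr ▸ hsub) hpd (hsum ▸ sdiff_subset),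
    List.map_congr_left (hfilter K), List.map_congr_left (hfilter_compl K)]

/-! ### The split-or-merge involution -/

def splitOrMerge (P Q : Finset ℕ) : SComp → SComp
  | [] => []
  | [g] => if (g ∩ P).Nonempty ∧ (g ∩ Q).Nonempty then [g ∩ P, g ∩ Q] else [g]
  | g :: h :: L =>
    if (g ∩ P).Nonempty ∧ (g ∩ Q).Nonempty then g ∩ P :: g ∩ Q :: h :: L
    else if g ∩ Q = ∅ ∧ h ∩ P = ∅ then (g ∪ h) :: L
    else g :: splitOrMerge P Q (h :: L)

section SplitOrMerge

variable {P Q : Finset ℕ} {γ : SComp}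

lemma inter_inter_eq_empty_of_disjoint (hPQ : Disjoint P Q) (g : Finset ℕ) : g ∩ P ∩ Q = ∅ :=
  disjoint_iff_inter_eq_empty.1 (hPQ.mono_left inter_subset_right)

lemma splitOrMerge_cons_of_mixed {g : Finset ℕ} (hg : (g ∩ P).Nonempty ∧ (g ∩ Q).Nonempty)
    (L : SComp) : splitOrMerge P Q (g :: L) = g ∩ P :: g ∩ Q :: L := by
  cases L <;> simp [splitOrMerge, hg]

lemma splitOrMerge_cons_cons_of_merge {g h : Finset ℕ} (hgQ : g ∩ Q = ∅) (hhP : h ∩ P = ∅)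
    (L : SComp) : splitOrMerge P Q (g :: h :: L) = (g ∪ h) :: L := by
  simp [splitOrMerge, hgQ, hhP]

lemma splitOrMerge_cons_cons_of_not {g h : Finset ℕ}
    (hmix : ¬((g ∩ P).Nonempty ∧ (g ∩ Q).Nonempty)) (hmerge : ¬(g ∩ Q = ∅ ∧ h ∩ P = ∅))
    (L : SComp) : splitOrMerge P Q (g :: h :: L) = g :: splitOrMerge P Q (h :: L) := by
  rw [splitOrMerge, if_neg hmix, if_neg hmerge]

lemma inter_headI_subset_headI_splitOrMerge : γ.headI ∩ P ⊆ (splitOrMerge P Q γ).headI := by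
  fun_induction splitOrMerge P Q γ with
  | case5 g h L => exact inter_subset_left.trans subset_union_left
  | _ => simp [inter_subset_left]

lemma sunion_splitOrMerge (hsub : ∀ g ∈ γ, g ⊆ P ∪ Q) : sunion (splitOrMerge P Q γ) = sunion γ := by
  fun_induction splitOrMerge P Q γ with
  | case2 g _ | case4 g _ _ _ =>
    simp only [sunion_cons, ← union_assoc, ← inter_union_distrib_left,
      inter_eq_left.2 (hsub g List.mem_cons_self)]
  | case5 => simp only [sunion_cons, union_assoc]
  | case6 g h L _ _ ih =>
    rw [sunion_cons, ih fun x hx => hsub x (List.mem_cons_of_mem g hx)]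
    rfl
  | _ => rfl

lemma nonempty_of_mem_splitOrMerge (hne : ∀ g ∈ γ, g.Nonempty) :
    ∀ g ∈ splitOrMerge P Q γ, g.Nonempty := by
  fun_induction splitOrMerge P Q γ with
  | case2 g hg | case4 g _ _ hg => simp_all
  | case5 g h L => simp_all [Nonempty.mono subset_union_left]
  | case6 g h L _ _ ih => simp_all
  | _ => simp_all

lemma pairwise_disjoint_splitOrMerge (hPQ : Disjoint P Q) (hsub : ∀ g ∈ γ, g ⊆ P ∪ Q)
    (hpd : γ.Pairwise Disjoint) : (splitOrMerge P Q γ).Pairwise Disjoint := by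
  fun_induction splitOrMerge P Q γ with
  | case2 g _ | case4 g _ _ _ =>
    obtain ⟨hg, hpd⟩ := List.pairwise_cons.1 hpd
    refine List.pairwise_cons.2 ⟨fun x hx => ?_, List.pairwise_cons.2 ⟨fun x hx => ?_, hpd⟩⟩
    · rcases List.mem_cons.1 hx with rfl | hx
      · exact hPQ.mono inter_subset_right inter_subset_right
      · exact (hg x hx).mono_left inter_subset_left
    · exact (hg x hx).mono_left inter_subset_left
  | case5 g h L =>
    obtain ⟨hg, hpd⟩ := List.pairwise_cons.1 hpd
    obtain ⟨hh, hpd⟩ := List.pairwise_cons.1 hpd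
    exact List.pairwise_cons.2 ⟨fun x hx => disjoint_union_left.2
      ⟨hg x (List.mem_cons_of_mem h hx), hh x hx⟩, hpd⟩
  | case6 g h L _ _ ih =>
    obtain ⟨hg, hpd⟩ := List.pairwise_cons.1 hpd
    have hsub' : ∀ x ∈ h :: L, x ⊆ P ∪ Q := fun x hx => hsub x (List.mem_cons_of_mem g hx)
    refine List.pairwise_cons.2 ⟨fun x hx => ?_, ih hsub' hpd⟩
    exact (disjoint_sunion hg).mono_right
      ((subset_sunion hx).trans (sunion_splitOrMerge hsub').subset)
  | _ => simp

lemma length_splitOrMerge (hP : (γ.headI ∩ P).Nonempty) (hQ : (sunion γ ∩ Q).Nonempty) :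
    (splitOrMerge P Q γ).length = γ.length + 1 ∨ (splitOrMerge P Q γ).length + 1 = γ.length := by
  fun_induction splitOrMerge P Q γ with
  | case1 => simp [sunion] at hQ
  | case3 g hmix =>
    simp only [List.headI_cons] at hP
    exact absurd ⟨hP, by simpa [sunion] using hQ⟩ hmix
  | case6 g h L hmix hmerge ih =>
    simp only [List.headI_cons] at hP
    have hgQ : g ∩ Q = ∅ := not_nonempty_iff_eq_empty.1 fun h => hmix ⟨hP, h⟩
    have hP' : ((h :: L).headI ∩ P).Nonempty :=
      nonempty_iff_ne_empty.2 fun h => hmerge ⟨hgQ, h⟩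
    rw [sunion_cons, union_inter_distrib_right, hgQ, empty_union] at hQ
    have := ih hP' hQ
    simp only [List.length_cons] at this ⊢
    omega
  | _ => simp

lemma splitOrMerge_splitOrMerge (hPQ : Disjoint P Q) (hsub : ∀ g ∈ γ, g ⊆ P ∪ Q)
    (hne : ∀ g ∈ γ, g.Nonempty) (hP : (γ.headI ∩ P).Nonempty) :
    splitOrMerge P Q (splitOrMerge P Q γ) = γ := by
  have hPQ' := inter_inter_eq_empty_of_disjoint hPQ
  have hQP' := inter_inter_eq_empty_of_disjoint hPQ.symm
  fun_induction splitOrMerge P Q γ with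
  | case1 => rfl
  | case2 g _ | case4 g _ _ _ =>
    rw [splitOrMerge_cons_cons_of_merge (hPQ' g) (hQP' g), ← inter_union_distrib_left,
      inter_eq_left.2 (hsub g List.mem_cons_self)]
  | case3 g hmix => simp [splitOrMerge, hmix]
  | case5 g h L _ hmerge =>
    have hg : (g ∪ h) ∩ P = g := by
      rw [union_inter_distrib_right, hmerge.2, union_empty, inter_eq_left]
      exact (disjoint_iff_inter_eq_empty.2 hmerge.1).left_le_of_le_sup_right (hsub g (by simp))
    have hh : (g ∪ h) ∩ Q = h := by
      rw [union_inter_distrib_right, hmerge.1, empty_union, inter_eq_left]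
      exact (disjoint_iff_inter_eq_empty.2 hmerge.2).left_le_of_le_sup_left (hsub h (by simp))
    rw [splitOrMerge_cons_of_mixed (by rw [hg, hh]; exact ⟨hne g (by simp), hne h (by simp)⟩), hg,
      hh]
  | case6 g h L hmix hmerge ih =>
    simp only [List.headI_cons] at hP
    have hgQ : g ∩ Q = ∅ := not_nonempty_iff_eq_empty.1 fun h => hmix ⟨hP, h⟩
    have hhP : (h ∩ P).Nonempty := nonempty_iff_ne_empty.2 fun h' => hmerge ⟨hgQ, h'⟩
    have hhead : h ∩ P ⊆ (splitOrMerge P Q (h :: L)).headI :=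
      inter_headI_subset_headI_splitOrMerge (γ := h :: L)
    obtain ⟨h', M, hφ⟩ : ∃ h' M, splitOrMerge P Q (h :: L) = h' :: M := by
      rcases hφ : splitOrMerge P Q (h :: L) with _ | ⟨h', M⟩
      · obtain ⟨x, hx⟩ := hhP
        rw [hφ] at hhead
        exact absurd (hhead hx) (notMem_empty x)
      · exact ⟨h', M, rfl⟩
    have hh'P : h' ∩ P ≠ ∅ := by
      rw [hφ, List.headI_cons] at hhead
      exact (hhP.mono (subset_inter hhead inter_subset_right)).ne_empty
    rw [hφ, splitOrMerge_cons_cons_of_not hmix (fun hc => hh'P hc.2), ← hφ,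
      ih (fun x hx => hsub x (List.mem_cons_of_mem g hx))
        (fun x hx => hne x (List.mem_cons_of_mem g hx)) hhP]

lemma applyComp_map_inter_splitOrMerge (hPQ : Disjoint P Q) {R : Finset ℕ} (hR : R = P ∨ R = Q)
    (A : Blocks) :
    applyComp ((splitOrMerge P Q γ).map (· ∩ R)) A = applyComp (γ.map (· ∩ R)) A := by
  have hPQ' := inter_inter_eq_empty_of_disjoint hPQ
  have hQP' := inter_inter_eq_empty_of_disjoint hPQ.symm
  have hRR : ∀ g : Finset ℕ, g ∩ R ∩ R = g ∩ R := fun g => by rw [inter_assoc, inter_self]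
  have drop_empty : ∀ (x : Finset ℕ) (L : SComp),
      applyComp (x :: ∅ :: L) A = applyComp (x :: L) A := fun x L => by
    rw [applyComp_cons, applyComp_cons_empty, applyComp_cons]
  fun_induction splitOrMerge P Q γ with
  | case2 | case4 =>
    rcases hR with rfl | rfl <;>
      simp only [List.map_cons, hRR, hPQ', hQP', drop_empty, applyComp_cons_empty]
  | case5 g h L _ hmerge =>
    rcases hR with rfl | rfl <;>
      simp only [List.map_cons, union_inter_distrib_right, hmerge.1, hmerge.2, union_empty,
        empty_union, drop_empty, applyComp_cons_empty]
  | case6 g h L _ _ ih =>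
    rw [List.map_cons, applyComp_cons, ih]
    rfl
  | _ => rfl

end SplitOrMerge

/-! ### The coproduct of `p(A)` -/

lemma finite_setOf_length_le_forall_mem {α : Type*} (s : Finset α) (n : ℕ) :
    {l : List α | l.length ≤ n ∧ ∀ x ∈ l, x ∈ s}.Finite := by
  refine ((List.finite_length_le s n).image (List.map Subtype.val)).subset fun l ⟨hl, hs⟩ => ?_
  refine ⟨l.attach.map fun x => ⟨x.1, hs x.1 x.2⟩, by simpa using hl, ?_⟩
  simp

lemma finite_setOf_isSCompOf (K : Finset ℕ) : {γ : SComp | IsSCompOf γ K}.Finite := by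
  refine (finite_setOf_length_le_forall_mem K.powerset #K).subset fun γ ⟨hne, hpd, hsu⟩ => ?_
  refine ⟨?_, fun g hg => mem_powerset.2 (hsu ▸ subset_sunion hg)⟩
  rw [← hsu, card_sunion hpd, ← List.length_map card]
  exact List.length_le_sum_of_one_le _ fun i hi => by
    obtain ⟨g, hg, rfl⟩ := List.mem_map.1 hi
    exact card_pos.2 (hne g hg)

lemma finite_setOf_isSCompOf_one_mem_headI (r : ℕ) :
    {γ : SComp | IsSCompOf γ (seg r) ∧ 1 ∈ γ.headI}.Finite :=
  (finite_setOf_isSCompOf (seg r)).subset fun _ h => h.1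

noncomputable def Gamma' (r : ℕ) : Finset SComp :=
  (finite_setOf_isSCompOf_one_mem_headI r).toFinset

lemma mem_Gamma' {r : ℕ} {γ : SComp} : γ ∈ Gamma' r ↔ IsSCompOf γ (seg r) ∧ 1 ∈ γ.headI :=
  Set.Finite.mem_toFinset _

lemma pNC_eq_sum (A : Blocks) (r : ℕ) :
    pNC A r = ∑ γ ∈ Gamma' r, (-1 : ℚ) ^ (γ.length - 1) • bas (applyComp γ A) := by
  rw [pNC, ← finsum_mem_coe_finset, Gamma', Set.Finite.coe_toFinset]

lemma one_le_length_of_mem_Gamma' {r : ℕ} {γ : SComp} (hγ : γ ∈ Gamma' r) : 1 ≤ γ.length := by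
  cases γ with
  | nil => exact absurd (mem_Gamma'.1 hγ).2 (notMem_empty 1)
  | cons => simp

lemma sum_Gamma'_eq_zero {M : Type*} [AddCommGroup M] [Module ℚ M] {r : ℕ} {P Q : Finset ℕ}
    (hPQ : Disjoint P Q) (hPQr : P ∪ Q = seg r) (hP : 1 ∈ P) (hQ : Q.Nonempty) (F : SComp → M)
    (hF : ∀ γ, F (splitOrMerge P Q γ) = F γ) :
    ∑ γ ∈ Gamma' r, (-1 : ℚ) ^ (γ.length - 1) • F γ = 0 := by
  have facts : ∀ γ ∈ Gamma' r, (∀ g ∈ γ, g ⊆ P ∪ Q) ∧ (γ.headI ∩ P).Nonempty := by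
    intro γ hγ
    obtain ⟨⟨-, -, hsu⟩, h1⟩ := mem_Gamma'.1 hγ
    exact ⟨fun g hg => hPQr ▸ hsu ▸ subset_sunion hg, ⟨1, mem_inter.2 ⟨h1, hP⟩⟩⟩
  have hmem : ∀ γ ∈ Gamma' r, splitOrMerge P Q γ ∈ Gamma' r := by
    intro γ hγ
    obtain ⟨hsub, hhead⟩ := facts γ hγ
    obtain ⟨⟨hne, hpd, hsu⟩, h1⟩ := mem_Gamma'.1 hγ
    exact mem_Gamma'.2 ⟨⟨nonempty_of_mem_splitOrMerge hne,
      pairwise_disjoint_splitOrMerge hPQ hsub hpd, (sunion_splitOrMerge hsub).trans hsu⟩,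
      inter_headI_subset_headI_splitOrMerge (mem_inter.2 ⟨h1, hP⟩)⟩
  have hlength : ∀ γ ∈ Gamma' r, (splitOrMerge P Q γ).length = γ.length + 1 ∨
      (splitOrMerge P Q γ).length + 1 = γ.length := by
    intro γ hγ
    obtain ⟨⟨-, -, hsu⟩, -⟩ := mem_Gamma'.1 hγ
    refine length_splitOrMerge (facts γ hγ).2 ?_
    rw [hsu, ← hPQr, inter_eq_right.2 subset_union_right]
    exact hQ
  refine sum_involution (fun γ _ => splitOrMerge P Q γ) (fun γ hγ => ?_) (fun γ hγ _ h => ?_)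
    hmem fun γ hγ => ?_
  · have h1 := one_le_length_of_mem_Gamma' hγ
    have h2 := one_le_length_of_mem_Gamma' (hmem γ hγ)
    have hsign : ∀ m n : ℕ, 1 ≤ m → n = m + 1 → (-1 : ℚ) ^ (m - 1) + (-1) ^ (n - 1) = 0 := by
      rintro m n hm rfl
      obtain ⟨k, rfl⟩ := Nat.exists_eq_add_of_le' hm
      simp [pow_succ]
    rw [hF, ← add_smul]
    rcases hlength γ hγ with h | h
    · rw [hsign _ _ h1 h, zero_smul]
    · rw [add_comm, hsign _ _ h2 h.symm, zero_smul]
  · have := hlength γ hγ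
    rw [h] at this
    omega
  · obtain ⟨hsub, hhead⟩ := facts γ hγ
    exact splitOrMerge_splitOrMerge hPQ hsub (mem_Gamma'.1 hγ).1.1 hhead

lemma applyComp_map_inter_empty (γ : SComp) (A : Blocks) : applyComp (γ.map (· ∩ ∅)) A = ∅ := by
  induction γ with
  | nil => rfl
  | cons g γ ih => rw [List.map_cons, inter_empty, applyComp_cons_empty, ih]

lemma map_inter_eq_self {γ : SComp} {S : Finset ℕ} (h : ∀ g ∈ γ, g ⊆ S) : γ.map (· ∩ S) = γ :=
  (List.map_congr_left fun g hg => inter_eq_left.2 (h g hg)).trans (List.map_id γ)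

lemma Delta_bas_applyComp {A : Blocks} (hA : IsPartition A) {r : ℕ} (hr : #A = r) {γ : SComp}
    (hγ : γ ∈ Gamma' r) :
    Delta (bas (applyComp γ A)) = bas (applyComp γ A) ⊗ₜ[ℚ] bas ∅ +
      bas ∅ ⊗ₜ[ℚ] bas (applyComp γ A) +
        ∑ T ∈ (seg r).powerset \ {∅, seg r}, coprodTerm A r γ T := by
  obtain ⟨⟨-, -, hsu⟩, h1⟩ := mem_Gamma'.1 hγ
  have hsub : ∀ g ∈ γ, g ⊆ seg r := fun g hg => hsu ▸ subset_sunion hg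
  have hr0 : (∅ : Finset ℕ) ≠ seg r := (ne_empty_of_mem (hsu ▸ headI_subset_sunion γ h1)).symm
  have hpair : {∅, seg r} ⊆ (seg r).powerset := insert_subset (empty_mem_powerset _)
    (singleton_subset_iff.2 (mem_powerset_self _))
  rw [Delta_bas, deltaB_applyComp hA hr (mem_Gamma'.1 hγ).1, ← sum_sdiff hpair, sum_pair hr0,
    coprodTerm, coprodTerm, applyComp_map_inter_empty, sdiff_empty, sdiff_self, bot_eq_empty,
    applyComp_map_inter_empty, map_inter_eq_self hsub]
  abel

lemma sum_Gamma'_coprodTerm_eq_zero (A : Blocks) {r : ℕ} {T : Finset ℕ} (hT : T ⊆ seg r)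
    (hT0 : T ≠ ∅) (hTr : T ≠ seg r) :
    ∑ γ ∈ Gamma' r, (-1 : ℚ) ^ (γ.length - 1) • coprodTerm A r γ T = 0 := by
  have hTc : (seg r \ T).Nonempty := sdiff_nonempty.2 fun h => hTr (subset_antisymm hT h)
  by_cases h1 : 1 ∈ T
  · have hPQ : Disjoint T (seg r \ T) := disjoint_sdiff
    refine sum_Gamma'_eq_zero hPQ (union_sdiff_of_subset hT) h1 hTc _ fun γ => ?_
    rw [coprodTerm, coprodTerm, applyComp_map_inter_splitOrMerge hPQ (.inl rfl),
      applyComp_map_inter_splitOrMerge hPQ (.inr rfl)]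
  · have hPQ : Disjoint (seg r \ T) T := sdiff_disjoint
    have h1' : 1 ∈ seg r \ T := by
      obtain ⟨x, hx⟩ := nonempty_iff_ne_empty.2 hT0
      exact mem_sdiff.2 ⟨mem_seg.2 ⟨le_rfl, (mem_seg.1 (hT hx)).1.trans (mem_seg.1 (hT hx)).2⟩, h1⟩
    refine sum_Gamma'_eq_zero hPQ (sdiff_union_of_subset hT) h1' (nonempty_iff_ne_empty.2 hT0) _
      fun γ => ?_
    rw [coprodTerm, coprodTerm, applyComp_map_inter_splitOrMerge hPQ (.inr rfl),
      applyComp_map_inter_splitOrMerge hPQ (.inl rfl)]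

end NCSym

open NCSym

theorem ncsym_pA_primitive_general (n r : ℕ) (A : Blocks)
    (hA : IsSP A n) (hr : A.card = r) :
    Delta (pNC A r) = pNC A r ⊗ₜ[ℚ] bas (∅ : Blocks) + bas (∅ : Blocks) ⊗ₜ[ℚ] pNC A r := by
  have hvanish : ∀ T ∈ (seg r).powerset \ {∅, seg r},
      ∑ γ ∈ Gamma' r, (-1 : ℚ) ^ (γ.length - 1) • coprodTerm A r γ T = 0 := by
    intro T hT
    simp only [mem_sdiff, mem_powerset, mem_insert, mem_singleton, not_or] at hT
    exact sum_Gamma'_coprodTerm_eq_zero A hT.1 hT.2.1 hT.2.2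
  rw [pNC_eq_sum, map_sum]
  simp only [map_smul]
  rw [sum_congr rfl fun γ hγ => by rw [Delta_bas_applyComp hA.isPartition hr hγ]]
  simp only [smul_add, sum_add_distrib, smul_sum]
  rw [sum_comm (s := Gamma' r), sum_eq_zero hvanish, add_zero, TensorProduct.sum_tmul,
    TensorProduct.tmul_sum]
  simp only [TensorProduct.smul_tmul', TensorProduct.tmul_smul]

/-- If `A` is an atomic set partition of `[n]` (`n ≥ 1`) with `r` blocks, then
`p(A) = ∑_{γ ∈ Γ'(r)} (-1)^{ℓ(γ)-1} γ[A]` is primitive: `Δ(p(A)) = p(A) ⊗ ∅ + ∅ ⊗ p(A)`. -/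
theorem ncsym_pA_primitive (n r : ℕ) (hn : 1 ≤ n) (A : Blocks)
    (hA : IsSP A n) (hr : A.card = r) (hatom : IsAtomicSP A n) :
    Delta (pNC A r) = pNC A r ⊗ₜ[ℚ] bas (∅ : Blocks) + bas (∅ : Blocks) ⊗ₜ[ℚ] pNC A r :=
  ncsym_pA_primitive_general n r A hA hr
end

section
/- Fix r ≥ 1 and an ordered partition K ⊔ L = [r] with 1 ∈ K and K ≠ [r]. Then ∑_{γ ∈ Γ'(r)} (−1)^{ℓ(γ)} (γ⌋_K) ⊗ (γ⌋_L) = 0, as an element of V ⊗ V, where V is the free ℚ-vector space with basis the set compositions of subsets of [r]. -/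
open Finset

/-- The restriction `γ⌋_K`: intersect every letter with `K` and drop empty intersections. -/
def restrictC (γ : SComp) (K : Finset ℕ) : SComp :=
  (γ.map (· ∩ K)).filter fun B => B.Nonempty

/-- The free `ℚ`-vector space with basis all words; in particular it contains the
set compositions of subsets of `[r]` as basis elements. -/
abbrev VComp := SComp →₀ ℚ

noncomputable instance : Zero (TensorProduct ℚ VComp VComp) :=
  (inferInstance : AddCommMonoid (TensorProduct ℚ VComp VComp)).toZero

/-!
The terms cancel in pairs under a sign-reversing involution. Since `1 ∈ K`, the first block of
`γ` meets `K`, and since `L ≠ ∅`, some block meets `L`. Scan `γ` through its leading blocks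
contained in `K` up to the first block `A` meeting `L`. If `A` also meets `K`, split it into
`A ∩ K, A ∩ L`; otherwise `A ⊆ L` follows a block `B ⊆ K`, and `B, A` is merged into `B ∪ A`.
The two moves are mutually inverse, keep `γ` in `Γ'(r)`, change `ℓ(γ)` by one, and do not
change `γ⌋_K` or `γ⌋_L`.
-/

lemma List.finite_setOf_nodup_forall_mem {α : Type*} (s : Finset α) :
    {l : List α | l.Nodup ∧ ∀ x ∈ l, x ∈ s}.Finite := by
  refine (s.toList.sublists.flatMap List.permutations).finite_toSet.subset ?_
  rintro l ⟨hnd, hs⟩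
  obtain ⟨m, hml, hm⟩ := List.subperm_of_subset hnd fun x hx => mem_toList.mpr (hs x hx)
  exact List.mem_flatMap.mpr ⟨m, List.mem_sublists.mpr hm, List.mem_permutations.mpr hml.symm⟩

namespace SComp

@[simp] lemma sunion_nil : sunion [] = ∅ := rfl

@[simp] lemma sunion_cons (A : Finset ℕ) (γ : SComp) : sunion (A :: γ) = A ∪ sunion γ := rfl

lemma sunion_append (γ δ : SComp) : sunion (γ ++ δ) = sunion γ ∪ sunion δ := by
  induction γ with
  | nil => simp
  | cons A γ ih => simp [ih, union_assoc]

lemma subset_sunion {B : Finset ℕ} {γ : SComp} (h : B ∈ γ) : B ⊆ sunion γ := by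
  induction γ with
  | nil => simp at h
  | cons A γ ih =>
    rcases List.mem_cons.mp h with rfl | h
    · exact subset_union_left
    · exact (ih h).trans subset_union_right

lemma restrictC_append (γ δ : SComp) (X : Finset ℕ) :
    restrictC (γ ++ δ) X = restrictC γ X ++ restrictC δ X := by
  simp [restrictC, List.filter_append]

lemma restrictC_cons_cons_of_disjoint {P Q X : Finset ℕ} (γ : SComp)
    (h : Disjoint P X ∨ Disjoint Q X) :
    restrictC (P :: Q :: γ) X = restrictC ((P ∪ Q) :: γ) X := by
  rcases h with h | h <;>
    simp [restrictC, List.filter_cons, disjoint_iff_inter_eq_empty.mp h, union_inter_distrib_right]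

lemma IsSCompOf.nodup {γ : SComp} {X : Finset ℕ} (h : IsSCompOf γ X) : γ.Nodup :=
  h.2.1.imp_of_mem fun {A B} hA _ (hAB : Disjoint A B) hEq =>
    (h.1 A hA).ne_empty (disjoint_self.mp (hEq ▸ hAB : Disjoint A A))

lemma isSCompOf_append_cons_cons_iff {P Q X : Finset ℕ} (pre suf : SComp)
    (hPQ : Disjoint P Q) (hP : P.Nonempty) (hQ : Q.Nonempty) :
    IsSCompOf (pre ++ P :: Q :: suf) X ↔ IsSCompOf (pre ++ (P ∪ Q) :: suf) X := by
  simp only [IsSCompOf, sunion_append, sunion_cons, union_assoc, List.pairwise_append,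
    List.pairwise_cons, List.mem_append, List.mem_cons, disjoint_union_left,
    disjoint_union_right, or_imp, forall_and, forall_eq, union_nonempty, hPQ, hP, hQ, true_and,
    true_or, and_assoc]

variable {K L : Finset ℕ}

lemma not_subset_of_disjoint (hKL : Disjoint K L) {B : Finset ℕ} (hB : B.Nonempty)
    (hBK : B ⊆ K) : ¬ B ⊆ L :=
  fun hBL => hB.ne_empty (disjoint_self.mp (hKL.mono hBK hBL))

def toggle (K L : Finset ℕ) : SComp → SComp
  | [] => []
  | [A] => if (A ∩ K).Nonempty ∧ (A ∩ L).Nonempty then [A ∩ K, A ∩ L] else [A]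
  | A :: B :: γ =>
    if (A ∩ K).Nonempty ∧ (A ∩ L).Nonempty then (A ∩ K) :: (A ∩ L) :: B :: γ
    else if A ⊆ K ∧ B ⊆ L then (A ∪ B) :: γ
    else A :: toggle K L (B :: γ)

lemma toggle_cons_of_nonempty {A : Finset ℕ} (γ : SComp) (hK : (A ∩ K).Nonempty)
    (hL : (A ∩ L).Nonempty) : toggle K L (A :: γ) = (A ∩ K) :: (A ∩ L) :: γ := by
  cases γ <;> simp [toggle, hK, hL]

lemma toggle_cons_cons_of_subset (hKL : Disjoint K L) {P Q : Finset ℕ} (γ : SComp)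
    (hP : P ⊆ K) (hQ : Q ⊆ L) : toggle K L (P :: Q :: γ) = (P ∪ Q) :: γ := by
  simp [toggle, hP, hQ, disjoint_iff_inter_eq_empty.mp (hKL.mono_left hP)]

lemma toggle_cons_cons_of_not_subset (hKL : Disjoint K L) {B C : Finset ℕ} (γ : SComp)
    (hB : B ⊆ K) (hC : ¬ C ⊆ L) : toggle K L (B :: C :: γ) = B :: toggle K L (C :: γ) := by
  simp [toggle, hC, disjoint_iff_inter_eq_empty.mp (hKL.mono_left hB)]

lemma toggle_append (hKL : Disjoint K L) {pre : SComp} {C : Finset ℕ} (γ : SComp)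
    (hpre : ∀ B ∈ pre, B.Nonempty ∧ B ⊆ K) (hC : ¬ C ⊆ L) :
    toggle K L (pre ++ C :: γ) = pre ++ toggle K L (C :: γ) := by
  induction pre with
  | nil => rfl
  | cons B pre ih =>
    have hB := hpre B List.mem_cons_self
    have hstep : toggle K L (B :: (pre ++ C :: γ)) = B :: toggle K L (pre ++ C :: γ) := by
      cases pre with
      | nil => exact toggle_cons_cons_of_not_subset hKL γ hB.2 hC
      | cons B' pre =>
        have hB' := hpre B' (by simp)
        exact toggle_cons_cons_of_not_subset hKL _ hB.2 (not_subset_of_disjoint hKL hB'.1 hB'.2)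
    rw [List.cons_append, hstep, ih fun B' h => hpre B' (List.mem_cons_of_mem _ h),
      List.cons_append]

def MergesTo (K L : Finset ℕ) (γ δ : SComp) : Prop :=
  ∃ pre P Q suf, (∀ B ∈ pre, B.Nonempty ∧ B ⊆ K) ∧ P.Nonempty ∧ P ⊆ K ∧ Q.Nonempty ∧ Q ⊆ L ∧
    γ = pre ++ P :: Q :: suf ∧ δ = pre ++ (P ∪ Q) :: suf

namespace MergesTo

variable {γ δ : SComp}

lemma length_eq (h : MergesTo K L γ δ) : γ.length = δ.length + 1 := by
  obtain ⟨pre, P, Q, suf, -, -, -, -, -, rfl, rfl⟩ := h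
  simp [add_assoc]

lemma cons {A : Finset ℕ} (hA : A.Nonempty) (hAK : A ⊆ K) (h : MergesTo K L γ δ) :
    MergesTo K L (A :: γ) (A :: δ) := by
  obtain ⟨pre, P, Q, suf, hpre, hP, hPK, hQ, hQL, rfl, rfl⟩ := h
  refine ⟨A :: pre, P, Q, suf, ?_, hP, hPK, hQ, hQL, rfl, rfl⟩
  simpa [hA, hAK] using hpre

lemma toggle_left (hKL : Disjoint K L) (h : MergesTo K L γ δ) : toggle K L γ = δ := by
  obtain ⟨pre, P, Q, suf, hpre, hP, hPK, -, hQL, rfl, rfl⟩ := h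
  rw [toggle_append hKL _ hpre (not_subset_of_disjoint hKL hP hPK),
    toggle_cons_cons_of_subset hKL _ hPK hQL]

lemma toggle_right (hKL : Disjoint K L) (h : MergesTo K L γ δ) : toggle K L δ = γ := by
  obtain ⟨pre, P, Q, suf, hpre, hP, hPK, hQ, hQL, rfl, rfl⟩ := h
  have hK : (P ∪ Q) ∩ K = P := by
    rw [union_inter_distrib_right, inter_eq_left.mpr hPK,
      disjoint_iff_inter_eq_empty.mp (hKL.symm.mono_left hQL), union_empty]
  have hL : (P ∪ Q) ∩ L = Q := by
    rw [union_inter_distrib_right, inter_eq_left.mpr hQL,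
      disjoint_iff_inter_eq_empty.mp (hKL.mono_left hPK), empty_union]
  have hPQ : ¬ P ∪ Q ⊆ L :=
    fun h => not_subset_of_disjoint hKL hP hPK (subset_union_left.trans h)
  rw [toggle_append hKL _ hpre hPQ, toggle_cons_of_nonempty _ (by rwa [hK]) (by rwa [hL]), hK, hL]

lemma restrictC_eq {X : Finset ℕ} (hX : Disjoint K X ∨ Disjoint L X) (h : MergesTo K L γ δ) :
    restrictC γ X = restrictC δ X := by
  obtain ⟨pre, P, Q, suf, -, -, hPK, -, hQL, rfl, rfl⟩ := h
  rw [restrictC_append, restrictC_append,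
    restrictC_cons_cons_of_disjoint _ (hX.imp (·.mono_left hPK) (·.mono_left hQL))]

lemma isSCompOf_iff (hKL : Disjoint K L) {X : Finset ℕ} (h : MergesTo K L γ δ) :
    IsSCompOf γ X ↔ IsSCompOf δ X := by
  obtain ⟨pre, P, Q, suf, -, hP, hPK, hQ, hQL, rfl, rfl⟩ := h
  exact isSCompOf_append_cons_cons_iff _ _ (hKL.mono hPK hQL) hP hQ

lemma mem_headI_iff (hKL : Disjoint K L) {x : ℕ} (hx : x ∈ K) (h : MergesTo K L γ δ) :
    x ∈ γ.headI ↔ x ∈ δ.headI := by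
  obtain ⟨pre, P, Q, suf, -, -, -, -, hQL, rfl, rfl⟩ := h
  cases pre with
  | nil =>
    have hxQ : x ∉ Q := fun hxQ => disjoint_left.mp hKL hx (hQL hxQ)
    simp [hxQ]
  | cons B pre => rfl

end MergesTo

theorem exists_mergesTo {γ : SComp} (hne : ∀ B ∈ γ, B.Nonempty)
    (hcov : sunion γ ⊆ K ∪ L) (hK : ¬ sunion γ ⊆ K) (hhead : ¬ γ.headI ⊆ L) :
    ∃ δ, MergesTo K L γ δ ∨ MergesTo K L δ γ := by
  induction γ with
  | nil => simp at hK
  | cons A γ ih =>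
    rw [sunion_cons, union_subset_iff] at hcov hK
    have hA := hne A List.mem_cons_self
    by_cases hAL : (A ∩ L).Nonempty
    · have hAK : (A ∩ K).Nonempty := by
        obtain ⟨x, hxA, hxL⟩ := not_subset.mp hhead
        exact ⟨x, mem_inter.mpr ⟨hxA, (mem_union.mp (hcov.1 hxA)).resolve_right hxL⟩⟩
      refine ⟨(A ∩ K) :: (A ∩ L) :: γ, .inr ⟨[], A ∩ K, A ∩ L, γ, by simp, hAK, inter_subset_right,
        hAL, inter_subset_right, rfl, ?_⟩⟩
      rw [List.nil_append, ← inter_union_distrib_left, inter_eq_left.mpr hcov.1]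
    · have hAK : A ⊆ K := fun x hx => (mem_union.mp (hcov.1 hx)).resolve_right
        fun hxL => hAL ⟨x, mem_inter.mpr ⟨hx, hxL⟩⟩
      cases γ with
      | nil => exact (hK ⟨hAK, empty_subset K⟩).elim
      | cons B γ =>
        by_cases hBL : B ⊆ L
        · exact ⟨(A ∪ B) :: γ, .inl ⟨[], A, B, γ, by simp, hA, hAK, hne B (by simp), hBL, rfl, rfl⟩⟩
        · obtain ⟨δ, h | h⟩ := ih (fun C hC => hne C (List.mem_cons_of_mem _ hC)) hcov.2
            (fun h => hK ⟨hAK, h⟩) hBL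
          · exact ⟨A :: δ, .inl (h.cons hA hAK)⟩
          · exact ⟨A :: δ, .inr (h.cons hA hAK)⟩

def Toggles (K L : Finset ℕ) (γ δ : SComp) : Prop :=
  MergesTo K L γ δ ∨ MergesTo K L δ γ

noncomputable def signedTerm (K L : Finset ℕ) (γ : SComp) : TensorProduct ℚ VComp VComp :=
  ((-1 : ℚ) ^ γ.length) •
    (Finsupp.single (restrictC γ K) (1 : ℚ) ⊗ₜ[ℚ] Finsupp.single (restrictC γ L) (1 : ℚ))

lemma MergesTo.signedTerm_add (hKL : Disjoint K L) {γ δ : SComp} (h : MergesTo K L γ δ) :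
    signedTerm K L γ + signedTerm K L δ = 0 := by
  rw [signedTerm, signedTerm, h.restrictC_eq (.inr hKL.symm), h.restrictC_eq (.inl hKL),
    h.length_eq, pow_succ, mul_neg_one, ← add_smul, neg_add_cancel, zero_smul]

namespace Toggles

variable {γ δ : SComp}

lemma symm (h : Toggles K L γ δ) : Toggles K L δ γ := Or.symm h

lemma ne (h : Toggles K L γ δ) : γ ≠ δ := by
  rintro rfl
  rcases h with h | h <;> simpa using h.length_eq

lemma toggle_eq (hKL : Disjoint K L) (h : Toggles K L γ δ) : toggle K L γ = δ :=
  h.elim (·.toggle_left hKL) (·.toggle_right hKL)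

lemma signedTerm_add (hKL : Disjoint K L) (h : Toggles K L γ δ) :
    signedTerm K L γ + signedTerm K L δ = 0 :=
  h.elim (·.signedTerm_add hKL) fun h => add_comm (signedTerm K L γ) _ ▸ h.signedTerm_add hKL

lemma isSCompOf_iff (hKL : Disjoint K L) {X : Finset ℕ} (h : Toggles K L γ δ) :
    IsSCompOf γ X ↔ IsSCompOf δ X :=
  h.elim (·.isSCompOf_iff hKL) fun h => (h.isSCompOf_iff hKL).symm

lemma mem_headI_iff (hKL : Disjoint K L) {x : ℕ} (hx : x ∈ K) (h : Toggles K L γ δ) :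
    x ∈ γ.headI ↔ x ∈ δ.headI :=
  h.elim (·.mem_headI_iff hKL hx) fun h => (h.mem_headI_iff hKL hx).symm

end Toggles

theorem toggles_toggle (hKL : Disjoint K L) {γ : SComp} (hne : ∀ B ∈ γ, B.Nonempty)
    (hcov : sunion γ ⊆ K ∪ L) (hK : ¬ sunion γ ⊆ K) (hhead : ¬ γ.headI ⊆ L) :
    Toggles K L γ (toggle K L γ) := by
  obtain ⟨δ, h⟩ := exists_mergesTo hne hcov hK hhead
  rwa [Toggles.toggle_eq hKL h]

lemma finite_setOf_isSCompOf (X : Finset ℕ) : {γ : SComp | IsSCompOf γ X}.Finite :=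
  (List.finite_setOf_nodup_forall_mem X.powerset).subset fun _ hγ =>
    ⟨IsSCompOf.nodup hγ, fun _ hB => mem_powerset.mpr (hγ.2.2 ▸ subset_sunion hB)⟩

end SComp

theorem ncsym_key_lemma_general (r : ℕ) (K L : Finset ℕ)
    (hdisj : Disjoint K L) (hcover : K ∪ L = seg r) (h1K : 1 ∈ K) (hK : K ≠ seg r) :
    (∑ᶠ γ ∈ {γ : SComp | IsSCompOf γ (seg r) ∧ 1 ∈ γ.headI},
        ((-1 : ℚ) ^ γ.length) •
          (Finsupp.single (restrictC γ K) (1 : ℚ) ⊗ₜ[ℚ] Finsupp.single (restrictC γ L) (1 : ℚ)))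
      = (0 : TensorProduct ℚ VComp VComp) := by
  have hfin : {γ : SComp | IsSCompOf γ (seg r) ∧ 1 ∈ γ.headI}.Finite :=
    (SComp.finite_setOf_isSCompOf (seg r)).subset fun _ hγ => hγ.1
  have hsegK : ¬ seg r ⊆ K := fun h => hK (subset_antisymm (hcover ▸ subset_union_left) h)
  have htoggles : ∀ γ ∈ hfin.toFinset, SComp.Toggles K L γ (SComp.toggle K L γ) := by
    intro γ hγ
    obtain ⟨⟨hne, -, hsu⟩, h1⟩ := hfin.mem_toFinset.mp hγ
    exact SComp.toggles_toggle hdisj hne (hsu.trans hcover.symm).subset (hsu ▸ hsegK)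
      fun h => disjoint_left.mp hdisj h1K (h h1)
  rw [finsum_mem_eq_finite_toFinset_sum _ hfin]
  refine sum_involution (fun γ _ => SComp.toggle K L γ)
    (fun γ hγ => (htoggles γ hγ).signedTerm_add hdisj) (fun γ hγ _ => (htoggles γ hγ).ne.symm)
    (fun γ hγ => ?_)
    (fun γ hγ => (htoggles γ hγ).symm.toggle_eq hdisj)
  obtain ⟨hcomp, h1⟩ := hfin.mem_toFinset.mp hγ
  exact hfin.mem_toFinset.mpr ⟨((htoggles γ hγ).isSCompOf_iff hdisj).mp hcomp,
    ((htoggles γ hγ).mem_headI_iff hdisj h1K).mp h1⟩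

/-- For `r ≥ 1` and an ordered partition `K ⊔ L = [r]` with `1 ∈ K`, `K ≠ [r]`,
`∑_{γ ∈ Γ'(r)} (-1)^{ℓ(γ)} (γ⌋_K) ⊗ (γ⌋_L) = 0` in `V ⊗ V`. -/
theorem ncsym_key_lemma (r : ℕ) (hr : 1 ≤ r) (K L : Finset ℕ)
    (hdisj : Disjoint K L) (hcover : K ∪ L = seg r) (h1K : 1 ∈ K) (hK : K ≠ seg r) :
    (∑ᶠ γ ∈ {γ : SComp | IsSCompOf γ (seg r) ∧ 1 ∈ γ.headI},
        ((-1 : ℚ) ^ γ.length) •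
          (Finsupp.single (restrictC γ K) (1 : ℚ) ⊗ₜ[ℚ] Finsupp.single (restrictC γ L) (1 : ℚ)))
      = (0 : TensorProduct ℚ VComp VComp) :=
  ncsym_key_lemma_general r K L hdisj hcover h1K hK
end
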